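/- The number of functions P : {0,1,2} × {0,1,2,3,4} → {0,1,…,8} such that for all i1 ≠ i2 in {0,1,2} and all j1 ≠ j2 in {0,1,2,3,4}, P(i1,j1) + P(i2,j2) ≠ P(i1,j2) + P(i2,j1), is at least 3 · 9^{11} = 94143178827. -/

import Mathlib

/-!
List the cells of the grid row by row and choose the entries greedily. An entry at cell `(i, j)`
closes a 4-cycle with an earlier cell `(i', j')`, `i' < i`, `j' < j`, for exactly one value, so at
least `q - i * j` of the `q` values are still free for it. Hence there are at least
`∏ (q - i * j)` grids without 4-cycles, which for `3 × 5` grids over `9` values is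
`9^5 · (9·8·7·6·5) · (9·7·5·3·1) = 843715731600 ≥ 3 · 9^11`.
-/

open Finset

section Greedy

variable {α : Type*} [Fintype α] [DecidableEq α]

def avoidingTuples {n : ℕ} (B : (k : Fin n) → (Fin k → α) → Finset α) :
    Finset (Fin n → α) :=
  {f | ∀ k, f k ∉ B k (Fin.take k k.isLt.le f)}

lemma mem_avoidingTuples_succ {n : ℕ} (B : (k : Fin (n + 1)) → (Fin k → α) → Finset α)
    (f : Fin (n + 1) → α) :
    f ∈ avoidingTuples B ↔ Fin.init f ∈ avoidingTuples (fun k => B k.castSucc) ∧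
      f (Fin.last n) ∉ B (Fin.last n) (Fin.init f) := by
  simp only [avoidingTuples, mem_filter, mem_univ, true_and, Fin.forall_fin_succ']
  rfl

lemma card_avoidingTuples_succ {n : ℕ} (B : (k : Fin (n + 1)) → (Fin k → α) → Finset α) :
    #(avoidingTuples B) =
      ∑ g ∈ avoidingTuples (fun k => B k.castSucc), #(B (Fin.last n) g)ᶜ := by
  rw [← card_sigma]
  refine card_nbij' (fun f => ⟨Fin.init f, f (Fin.last n)⟩) (fun p => Fin.snoc p.1 p.2)
    ?_ ?_ (fun f _ => Fin.snoc_init_self f) (fun p _ => by simp)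
  · intro f hf
    simpa [mem_avoidingTuples_succ] using hf
  · rintro ⟨g, a⟩ h
    simp_all [mem_avoidingTuples_succ]

theorem prod_card_sub_le_card_avoidingTuples :
    ∀ {n : ℕ} (B : (k : Fin n) → (Fin k → α) → Finset α) (b : Fin n → ℕ),
      (∀ k g, #(B k g) ≤ b k) → ∏ k, (Fintype.card α - b k) ≤ #(avoidingTuples B)
  | 0, _, _, _ => by simp [avoidingTuples]
  | n + 1, B, b, hB => by
    calc ∏ k, (Fintype.card α - b k)
        = (∏ k : Fin n, (Fintype.card α - b k.castSucc)) * (Fintype.card α - b (Fin.last n)) :=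
          Fin.prod_univ_castSucc _
      _ ≤ #(avoidingTuples fun k => B k.castSucc) * (Fintype.card α - b (Fin.last n)) :=
          Nat.mul_le_mul_right _
            (prod_card_sub_le_card_avoidingTuples _ _ fun k g => hB k.castSucc g)
      _ ≤ #(avoidingTuples B) := by
          rw [card_avoidingTuples_succ, ← smul_eq_mul]
          refine card_nsmul_le_sum _ _ _ fun g _ => ?_
          rw [card_compl]
          exact Nat.sub_le_sub_left (hB _ _) _

end Greedy

section FourCycles

def IsFourCycleFree {ι κ : Type*} (a : ι → κ → ℕ) : Prop :=
  ∀ i1 i2 j1 j2, i1 ≠ i2 → j1 ≠ j2 → a i1 j1 + a i2 j2 ≠ a i1 j2 + a i2 j1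

lemma isFourCycleFree_of_lt {ι κ : Type*} [LinearOrder ι] [LinearOrder κ]
    {a : ι → κ → ℕ}
    (h : ∀ i1 i2 j1 j2, i1 < i2 → j1 < j2 → a i1 j1 + a i2 j2 ≠ a i1 j2 + a i2 j1) :
    IsFourCycleFree a := by
  intro i1 i2 j1 j2 hi hj
  rcases hi.lt_or_gt with hi | hi <;> rcases hj.lt_or_gt with hj | hj
  · exact h _ _ _ _ hi hj
  · have := h _ _ _ _ hi hj; omega
  · have := h _ _ _ _ hi hj; omega
  · have := h _ _ _ _ hi hj; omega

variable {m n q : ℕ}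

lemma finProdFinEquiv_lt_of_fst_lt {i i' : Fin m} (j j' : Fin n) (h : i' < i) :
    finProdFinEquiv (i', j') < finProdFinEquiv (i, j) := by
  rw [Fin.lt_def] at h ⊢
  simp only [finProdFinEquiv_apply_val]
  nlinarith [j'.isLt]

lemma finProdFinEquiv_lt_of_snd_lt (i : Fin m) {j j' : Fin n} (h : j' < j) :
    finProdFinEquiv (i, j') < finProdFinEquiv (i, j) := by
  rw [Fin.lt_def] at h ⊢
  simp only [finProdFinEquiv_apply_val]
  omega

def prefixValue {N k : ℕ} (g : Fin k → Fin q) (x : Fin N) : ℕ :=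
  if h : (x : ℕ) < k then g ⟨x, h⟩ else 0

lemma prefixValue_take {N : ℕ} (f : Fin N → Fin q) {k : ℕ} (hk : k ≤ N) {x : Fin N}
    (hx : (x : ℕ) < k) : prefixValue (Fin.take k hk f) x = f x := by
  simp [prefixValue, hx, Fin.take_apply]

/-- The values at cell `c` that close a 4-cycle with earlier cells `d`, `(d.1, c.2)`,
`(c.1, d.2)`, when `g` lists the preceding entries of the grid row by row. -/
def closingValues {k : ℕ} (g : Fin k → Fin q) (c : Fin m × Fin n) : Finset (Fin q) :=
  let r : Fin m × Fin n → ℕ := fun d => prefixValue g (finProdFinEquiv d)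
  {v | (v : ℕ) ∈ (Iio c.1 ×ˢ Iio c.2).image fun d => r (d.1, c.2) + r (c.1, d.2) - r d}

lemma card_closingValues_le {k : ℕ} (g : Fin k → Fin q) (c : Fin m × Fin n) :
    #(closingValues g c) ≤ c.1 * c.2 := by
  calc #(closingValues g c) ≤ #((Iio c.1 ×ˢ Iio c.2).image _) :=
        card_le_card_of_injOn Fin.val (fun v hv => (mem_filter.1 hv).2) Fin.val_injective.injOn
    _ ≤ c.1 * c.2 := by
        refine card_image_le.trans ?_
        rw [card_product, Fin.card_Iio, Fin.card_Iio]

lemma isFourCycleFree_of_mem_avoidingTuples {f : Fin (m * n) → Fin q}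
    (hf : f ∈ avoidingTuples fun k g => closingValues g (finProdFinEquiv.symm k)) :
    IsFourCycleFree fun i j => (f (finProdFinEquiv (i, j)) : ℕ) := by
  refine isFourCycleFree_of_lt fun i1 i2 j1 j2 hi hj hcycle => ?_
  have read (d) (hd : finProdFinEquiv d < finProdFinEquiv (i2, j2)) :=
    prefixValue_take f (finProdFinEquiv (i2, j2)).isLt.le hd
  refine (mem_filter.1 hf).2 (finProdFinEquiv (i2, j2)) ?_
  simp only [closingValues, Equiv.symm_apply_apply, mem_filter, mem_univ, true_and, mem_image,
    mem_product, mem_Iio]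
  refine ⟨(i1, j1), ⟨hi, hj⟩, ?_⟩
  rw [read _ (finProdFinEquiv_lt_of_fst_lt _ _ hi), read _ (finProdFinEquiv_lt_of_snd_lt _ hj),
    read _ ((finProdFinEquiv_lt_of_fst_lt _ _ hi).trans (finProdFinEquiv_lt_of_snd_lt _ hj))]
  omega

theorem prod_sub_mul_le_ncard_isFourCycleFree (m n q : ℕ) :
    ∏ c : Fin m × Fin n, (q - c.1 * c.2) ≤
      {P : Fin m → Fin n → Fin q | IsFourCycleFree fun i j => (P i j : ℕ)}.ncard := by
  let toGrid : (Fin (m * n) → Fin q) → Fin m → Fin n → Fin q :=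
    fun f i j => f (finProdFinEquiv (i, j))
  have toGrid_injective : toGrid.Injective := by
    intro f f' h
    funext k
    simpa only [toGrid, Prod.mk.eta, Equiv.apply_symm_apply] using
      congr_fun₂ h (finProdFinEquiv.symm k).1 (finProdFinEquiv.symm k).2
  calc ∏ c : Fin m × Fin n, (q - c.1 * c.2)
      = ∏ k : Fin (m * n),
          (Fintype.card (Fin q) - (finProdFinEquiv.symm k).1 * (finProdFinEquiv.symm k).2) := by
        rw [Fintype.card_fin]
        exact Fintype.prod_equiv finProdFinEquiv _ _ fun c => by simp
    _ ≤ #(avoidingTuples fun k g => closingValues g (finProdFinEquiv.symm k)) :=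
        prod_card_sub_le_card_avoidingTuples _ _ fun k g => card_closingValues_le g _
    _ ≤ _ := by
        rw [← Set.ncard_coe_finset]
        exact Set.ncard_le_ncard_of_injOn toGrid
          (fun f hf => isFourCycleFree_of_mem_avoidingTuples hf) toGrid_injective.injOn

end FourCycles

/-- Worked example (fully connected `3 × 5` base matrix): the number of
partition matrices `P : {0,1,2} × {0,1,2,3,4} → {0,…,8}` destroying all
4-cycle candidates is at least `3 · 9^11 = 94143178827`. -/
theorem counting_example_3x5 :
    3 * 9 ^ 11 = 94143178827 ∧
    (94143178827 : ℕ) ≤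
      {P : Fin 3 → Fin 5 → Fin 9 |
        ∀ i1 i2 : Fin 3, ∀ j1 j2 : Fin 5, i1 ≠ i2 → j1 ≠ j2 →
          (P i1 j1 : ℕ) + (P i2 j2 : ℕ) ≠
          (P i1 j2 : ℕ) + (P i2 j1 : ℕ)}.ncard := by
  refine ⟨by norm_num, le_trans ?_ (prod_sub_mul_le_ncard_isFourCycleFree 3 5 9)⟩
  decide
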